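/- arXiv:2506.01003 — 2 statements merged into one kernel-verified Lean document; each statement's English description precedes it below -/
import Mathlib

section
/- Fix a canonical mechanism M(φ, x₁,…,x_{2d+1}), a Devil strategy σ guaranteeing ¬γ, and the degree-of-immorality measure ‖·‖. For every k ≥ 0 and every action profile s, if either γ holds at s, or k > 0 and some agent is k-order responsible under s, then ‖s‖ ≤ k. -/
/-!
Suppose agent `j` is `k`-order responsible at `s`, with witness deviation `t`. Completing `t`
after `j` by setting every later `q` false and letting the Devil play `σ` (possible because `σ`
is causal) loses at most one sin of `s`: agent `j`'s own `q` when `j` carries one, and otherwise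
only the conformity sin, since the Devil's earlier moves are unchanged. By induction on `k`, a
profile with more than `k` sins therefore lies in the order-`k` responsibility gap, which the
completed deviation would have to avoid. Profiles satisfying `γ` have no sins, as `σ` forces `¬γ`.
-/

/-- A sequential decision-making mechanism has `n` agents acting in order; agent `i`
controls an action block of type `A i` (the Boolean valuations of its variable block),
and the deontic constraint is a predicate `γ` on action profiles.
`Resp γ d i s` says that agent `i` is `d`-order responsible under profile `s`:
`R^d_i = Gap_{d-1} ∧ ∃v_i ∀v_{i+1} … ∀v_n ¬Gap_{d-1}`,
where `Gap_{d-1} = ¬γ ∧ ⋀_{j≤n} ⋀_{1≤e<d} ¬R^e_j`. -/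
def Resp {n : ℕ} {A : Fin n → Type} (γ : (∀ i, A i) → Prop) :
    (d : ℕ) → Fin n → (∀ i, A i) → Prop
  | 0, _, _ => False
  | d+1, i, s =>
    (¬ γ s ∧ ∀ e ≤ d, ∀ j, ¬ Resp γ e j s) ∧
    ∃ t : ∀ i', A i', (∀ j, j < i → t j = s j) ∧
      ∀ u : ∀ i', A i', (∀ j, j ≤ i → u j = t j) →
        ¬ (¬ γ u ∧ ∀ e ≤ d, ∀ j, ¬ Resp γ e j u)
termination_by d => d
decreasing_by all_goals omega

/-- A mechanism is `d`-gap-free if for every profile violating the deontic constraint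
there are `d' ≤ d` and an agent who is `d'`-order responsible. -/
def GapFree {n : ℕ} {A : Fin n → Type} (γ : (∀ i, A i) → Prop) (d : ℕ) : Prop :=
  ∀ s, ¬ γ s → ∃ d' ≤ d, ∃ i, Resp γ d' i s

/-- Action block of agent `i` in the canonical mechanism `M(φ, x₁,…,x_{2d+1})`:
the original block `X i`, extended by one fresh Boolean variable `q` exactly when
`i` is even in 1-based counting (odd in 0-based counting); for the other agents the
extension is the empty block `Fin 0 → Bool`. -/
def CanA {d : ℕ} (X : Fin (2*d+1) → Type) (i : Fin (2*d+1)) : Type :=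
  X i × (Fin ((i : ℕ) % 2) → Bool)

/-- Deontic constraint of the canonical mechanism: `γ = φ ∧ ⋀_{1≤i≤d} q_{2i}`. -/
def canGamma {d : ℕ} (X : Fin (2*d+1) → Type) (φ : (∀ i, X i) → Prop)
    (s : ∀ i, CanA X i) : Prop :=
  φ (fun i => (s i).1) ∧ ∀ i, ∀ j, (s i).2 j = true

/-- `s` conforms to the Devil strategy `σ`: every odd-numbered (1-based; even
0-based) block of `s` is the one prescribed by `σ`. -/
def Conform {n : ℕ} {A : Fin n → Type}
    (σ : ∀ i : Fin n, (∀ j, A j) → A i) (s : ∀ i, A i) : Prop :=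
  ∀ i : Fin n, (i : ℕ) % 2 = 0 → s i = σ i s

open Classical in
/-- The degree of immorality `‖s‖`: one sin for each fresh variable `q_{2i}`
that is false under `s`, plus one sin if `s` conforms to the Devil strategy `σ`. -/
noncomputable def immorality {d : ℕ} {X : Fin (2*d+1) → Type}
    (σ : ∀ i : Fin (2*d+1), (∀ j, CanA X j) → CanA X i)
    (s : ∀ i, CanA X i) : ℕ :=
  (Finset.univ.filter (fun i : Fin (2*d+1) => ∃ j, (s i).2 j = false)).card
  + (if Conform σ s then 1 else 0)

def IsCausal {n : ℕ} {A : Fin n → Type} (σ : ∀ i : Fin n, (∀ j, A j) → A i) : Prop :=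
  ∀ (i : Fin n) (s t : ∀ j, A j), (∀ j, j < i → s j = t j) → σ i s = σ i t

section Responsibility

variable {n : ℕ} {A : Fin n → Type} {γ : (∀ i, A i) → Prop} {μ : (∀ i, A i) → ℕ}

theorem not_gamma_and_not_resp_of_lt (hzero : ∀ s, γ s → μ s = 0)
    (hext : ∀ (j : Fin n) (t u : ∀ i, A i), (∀ p, p < j → t p = u p) →
      ∃ w : ∀ i, A i, (∀ p, p ≤ j → w p = t p) ∧ μ u ≤ μ w + 1) :
    ∀ (k : ℕ) (s : ∀ i, A i), k < μ s → ¬ γ s ∧ ∀ e ≤ k, ∀ j, ¬ Resp γ e j s := by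
  intro k
  induction k using Nat.strong_induction_on with
  | _ k ih =>
    intro s hs
    refine ⟨fun hγ => by simp [hzero s hγ] at hs, ?_⟩
    rintro (_ | e) he j hresp
    · rw [Resp] at hresp
      exact hresp
    · rw [Resp] at hresp
      obtain ⟨-, t, hts, hgap⟩ := hresp
      obtain ⟨w, hwt, hμ⟩ := hext j t s hts
      exact hgap w hwt (ih e (by omega) w (by omega))

theorem le_of_resp (hzero : ∀ s, γ s → μ s = 0)
    (hext : ∀ (j : Fin n) (t u : ∀ i, A i), (∀ p, p < j → t p = u p) →
      ∃ w : ∀ i, A i, (∀ p, p ≤ j → w p = t p) ∧ μ u ≤ μ w + 1)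
    {k : ℕ} {i : Fin n} {s : ∀ i, A i} (h : Resp γ k i s) : μ s ≤ k := by
  by_contra! hlt
  exact (not_gamma_and_not_resp_of_lt hzero hext k s hlt).2 k le_rfl i h

end Responsibility

theorem IsCausal.exists_fixedPoint {n : ℕ} {A : Fin n → Type}
    {σ : ∀ i : Fin n, (∀ j, A j) → A i} (hσ : IsCausal σ) (P : Fin n → Prop)
    (v : ∀ i, A i) :
    ∃ w : ∀ i, A i, (∀ i, P i → w i = σ i w) ∧ (∀ i, ¬ P i → w i = v i) := by
  classical
  suffices ∀ m : ℕ, ∃ w : ∀ i, A i,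
      ∀ i : Fin n, (i : ℕ) < m → w i = if P i then σ i w else v i by
    obtain ⟨w, hw⟩ := this n
    exact ⟨w, fun i hi => (hw i i.2).trans (if_pos hi),
      fun i hi => (hw i i.2).trans (if_neg hi)⟩
  intro m
  induction m with
  | zero => exact ⟨v, fun i hi => absurd hi (Nat.not_lt_zero _)⟩
  | succ m ih =>
    obtain ⟨w, hw⟩ := ih
    by_cases hm : m < n
    swap
    · exact ⟨w, fun i _ => hw i (by omega)⟩
    obtain ⟨j, rfl⟩ : ∃ j : Fin n, (j : ℕ) = m := ⟨⟨m, hm⟩, rfl⟩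
    have hσ_update : ∀ (a : A j) (i : Fin n), i ≤ j → σ i (Function.update w j a) = σ i w :=
      fun a i hi => hσ i _ _ fun p hp => Function.update_of_ne (hp.trans_le hi).ne _ _
    refine ⟨Function.update w j (if P j then σ j w else v j), fun i hi => ?_⟩
    rcases Nat.lt_succ_iff_lt_or_eq.1 hi with hi | hi
    · rw [Function.update_of_ne (Fin.ne_of_lt hi), hw i hi, hσ_update _ i (Fin.le_of_lt hi)]
    · obtain rfl : i = j := Fin.ext hi
      rw [Function.update_self, hσ_update _ i le_rfl]

section Canonical

variable {d : ℕ} {X : Fin (2*d+1) → Type} {φ : (∀ i, X i) → Prop}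
  {σ : ∀ i : Fin (2*d+1), (∀ j, CanA X j) → CanA X i}

open Classical in
noncomputable def falseQ (s : ∀ i, CanA X i) : Finset (Fin (2*d+1)) :=
  Finset.univ.filter fun i => ∃ j, (s i).2 j = false

open Classical in
theorem immorality_eq (s : ∀ i, CanA X i) :
    immorality σ s = (falseQ s).card + if Conform σ s then 1 else 0 := rfl

theorem odd_of_mem_falseQ {s : ∀ i, CanA X i} {i : Fin (2*d+1)} (h : i ∈ falseQ s) :
    (i : ℕ) % 2 = 1 := by
  obtain ⟨⟨k, hk⟩, -⟩ := (Finset.mem_filter.1 h).2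
  omega

theorem immorality_eq_zero (hguar : ∀ s, Conform σ s → ¬ canGamma X φ s)
    {s : ∀ i, CanA X i} (hγ : canGamma X φ s) : immorality σ s = 0 := by
  have hq : falseQ s = ∅ :=
    Finset.filter_false_of_mem fun i _ ⟨k, hk⟩ => by simp [hγ.2 i k] at hk
  rw [immorality_eq, hq, if_neg fun hc => hguar s hc hγ]
  rfl

theorem exists_devil_completion (hσ : IsCausal σ) (j : Fin (2*d+1)) (t : ∀ i, CanA X i) :
    ∃ w : ∀ i, CanA X i, (∀ p, p ≤ j → w p = t p) ∧
      (∀ i, j < i → (i : ℕ) % 2 = 1 → i ∈ falseQ w) ∧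
      (∀ i, j < i → (i : ℕ) % 2 = 0 → w i = σ i w) := by
  obtain ⟨w, hwσ, hwv⟩ := hσ.exists_fixedPoint (fun i => j < i ∧ (i : ℕ) % 2 = 0)
    fun i => if i ≤ j then t i else (((t i).1, fun _ => false) : CanA X i)
  refine ⟨w, fun p hp => (hwv p fun h => absurd hp (not_le.2 h.1)).trans (if_pos hp),
    fun i hji hi => Finset.mem_filter.2 ⟨Finset.mem_univ _, ⟨0, by omega⟩, ?_⟩,
    fun i hji hi => hwσ i ⟨hji, hi⟩⟩
  rw [(hwv i (by omega)).trans (if_neg (not_le.2 hji))]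

theorem immorality_le_add_one_of_completion (hσ : IsCausal σ) {j : Fin (2*d+1)}
    {u w : ∀ i, CanA X i} (hwu : ∀ p, p < j → w p = u p)
    (hfalse : ∀ i, j < i → (i : ℕ) % 2 = 1 → i ∈ falseQ w)
    (hdevil : ∀ i, j < i → (i : ℕ) % 2 = 0 → w i = σ i w) :
    immorality σ u ≤ immorality σ w + 1 := by
  have hsub : falseQ u ⊆ insert j (falseQ w) := by
    intro i hi
    rcases lt_trichotomy i j with hij | rfl | hji
    · exact Finset.mem_insert_of_mem (by simpa [falseQ, hwu i hij] using hi)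
    · exact Finset.mem_insert_self _ _
    · exact Finset.mem_insert_of_mem (hfalse i hji (odd_of_mem_falseQ hi))
  rw [immorality_eq, immorality_eq]
  rcases Nat.mod_two_eq_zero_or_one (j : ℕ) with hj | hj
  · -- agent `j` has no `q`, so only the conformity sin can be lost
    have hj_notMem : j ∉ falseQ u := fun h => by have := odd_of_mem_falseQ h; omega
    have := Finset.card_le_card ((Finset.subset_insert_iff_of_notMem hj_notMem).1 hsub)
    split_ifs <;> omega
  · have hconf : Conform σ u → Conform σ w := fun hu i hi => by
      rcases lt_or_gt_of_ne (show i ≠ j by rintro rfl; omega) with hij | hji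
      · rw [hwu i hij, hu i hi]
        exact hσ i u w fun p hp => (hwu p (hp.trans hij)).symm
      · exact hdevil i hji hi
    have := (Finset.card_le_card hsub).trans (Finset.card_insert_le _ _)
    split_ifs with hu hw <;> first | omega | exact absurd (hconf hu) hw

theorem exists_immorality_le_add_one (hσ : IsCausal σ) (j : Fin (2*d+1))
    (t u : ∀ i, CanA X i) (htu : ∀ p, p < j → t p = u p) :
    ∃ w : ∀ i, CanA X i, (∀ p, p ≤ j → w p = t p) ∧
      immorality σ u ≤ immorality σ w + 1 := by
  obtain ⟨w, hwt, hfalse, hdevil⟩ := exists_devil_completion hσ j t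
  exact ⟨w, hwt, immorality_le_add_one_of_completion hσ
    (fun p hp => (hwt p hp.le).trans (htu p hp)) hfalse hdevil⟩

end Canonical

/-- For every `k ≥ 0` and profile `s`, if either the deontic constraint holds at
`s`, or `k > 0` and some agent is `k`-order responsible under `s`, then the
degree of immorality of `s` is at most `k`. -/
theorem immorality_le_order {d : ℕ} (X : Fin (2*d+1) → Type)
    (φ : (∀ i, X i) → Prop)
    (σ : ∀ i : Fin (2*d+1), (∀ j, CanA X j) → CanA X i)
    (hstrat : ∀ (i : Fin (2*d+1)) (s t : ∀ j, CanA X j),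
      (∀ j, j < i → s j = t j) → σ i s = σ i t)
    (hguar : ∀ s, Conform σ s → ¬ canGamma X φ s) :
    ∀ (k : ℕ) (s : ∀ i, CanA X i),
      (canGamma X φ s ∨ (0 < k ∧ ∃ i, Resp (canGamma X φ) k i s)) →
      immorality σ s ≤ k := by
  rintro k s (hγ | ⟨-, i, hresp⟩)
  · simp [immorality_eq_zero hguar hγ]
  · exact le_of_resp (fun s hγ => immorality_eq_zero hguar hγ)
      (exists_immorality_le_add_one hstrat) hresp
end

section
/- For any canonical mechanism M(φ, x₁,…,x_{2d+1}) with γ = φ ∧ ⋀_{1≤i≤d} q_{2i}: the mechanism is d-gap-free if and only if the closed quantified Boolean formula ∀x₁ ∃x₂ ∀x₃ … ∃x_{2d} ∀x_{2d+1} φ is true. -/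
/-- `AltTrue n A γ k s` : alternating quantification over the remaining blocks
`k, k+1, …, n-1` (a `∀` over block `k` when `k` is even in 0-based counting,
i.e. blocks 1,3,5,… in 1-based counting, and `∃` when `k` is odd), of the
statement that `γ` holds at the resulting profile.  Reading `∀` as Devil's
moves and `∃` as Moralist's moves, `AltTrue n A γ k s` says that the game node
reached after the first `k` moves recorded in `s` is winning for Moralist. -/
def AltTrue (n : ℕ) (A : Fin n → Type) (γ : (∀ i, A i) → Prop) :
    (k : ℕ) → (∀ i, A i) → Prop :=
  fun k s =>
    if h : k < n then
      if k % 2 = 0 then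
        ∀ a : A ⟨k, h⟩, AltTrue n A γ (k+1) (Function.update s ⟨k, h⟩ a)
      else
        ∃ a : A ⟨k, h⟩, AltTrue n A γ (k+1) (Function.update s ⟨k, h⟩ a)
    else γ s
termination_by k => n - k
decreasing_by all_goals omega

/-!
Read the formula as a game in which Devil chooses the odd-numbered blocks and Moralist the
even-numbered ones. If Moralist wins, then, going backwards from the last Moralist, Moralist `2i`
can play a winning move and set `q_{2i}`, and so force away every gap of order `d - i`; hence a
violation for which nobody is responsible of order below `d` makes the first Moralist
`d`-order responsible. If Devil wins, take a play that is lost for Moralist at every position,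
with every `q` false. Its degree of immorality is `d + 1`; a single deviation lowers the degree
by at most one, and a profile of degree `e + 1` has a gap of order `e`, so this play has a gap
of order `d`.
-/

section AltTrue

variable {n : ℕ} {A : Fin n → Type} {φ : (∀ i, A i) → Prop}

theorem altTrue_of_le {k : ℕ} {x : ∀ i, A i} (hk : n ≤ k) : AltTrue n A φ k x ↔ φ x := by
  rw [AltTrue, dif_neg (by omega)]

theorem altTrue_of_even {k : ℕ} {x : ∀ i, A i} (hk : k < n) (h2 : k % 2 = 0) :
    AltTrue n A φ k x ↔ ∀ a, AltTrue n A φ (k + 1) (Function.update x ⟨k, hk⟩ a) := by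
  rw [AltTrue, dif_pos hk, if_pos h2]

theorem altTrue_of_odd {k : ℕ} {x : ∀ i, A i} (hk : k < n) (h2 : k % 2 = 1) :
    AltTrue n A φ k x ↔ ∃ a, AltTrue n A φ (k + 1) (Function.update x ⟨k, hk⟩ a) := by
  rw [AltTrue, dif_pos hk, if_neg (by omega)]

theorem AltTrue.succ_of_even {k : ℕ} {x : ∀ i, A i} (h2 : k % 2 = 0)
    (hx : AltTrue n A φ k x) : AltTrue n A φ (k + 1) x := by
  by_cases hk : k < n
  · simpa using (altTrue_of_even hk h2).1 hx (x ⟨k, hk⟩)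
  · exact (altTrue_of_le (by omega)).2 ((altTrue_of_le (by omega)).1 hx)

theorem AltTrue.of_succ_of_odd {k : ℕ} {x : ∀ i, A i} (h2 : k % 2 = 1)
    (hx : AltTrue n A φ (k + 1) x) : AltTrue n A φ k x := by
  by_cases hk : k < n
  · exact (altTrue_of_odd hk h2).2 ⟨x ⟨k, hk⟩, by simpa using hx⟩
  · exact (altTrue_of_le (by omega)).2 ((altTrue_of_le (by omega)).1 hx)

theorem altTrue_congr {k : ℕ} {x y : ∀ i, A i} (hxy : ∀ i : Fin n, (i : ℕ) < k → x i = y i) :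
    AltTrue n A φ k x ↔ AltTrue n A φ k y := by
  by_cases hk : k < n
  · have hupd (a : A ⟨k, hk⟩) : AltTrue n A φ (k + 1) (Function.update x ⟨k, hk⟩ a) ↔
        AltTrue n A φ (k + 1) (Function.update y ⟨k, hk⟩ a) := by
      refine altTrue_congr fun i hi => ?_
      by_cases hik : i = ⟨k, hk⟩
      · subst hik
        simp
      · have : (i : ℕ) ≠ k := fun h => hik (Fin.ext h)
        rw [Function.update_of_ne hik, Function.update_of_ne hik]
        exact hxy i (by omega)
    rcases Nat.mod_two_eq_zero_or_one k with h2 | h2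
    · rw [altTrue_of_even hk h2, altTrue_of_even hk h2]
      exact forall_congr' hupd
    · rw [altTrue_of_odd hk h2, altTrue_of_odd hk h2]
      exact exists_congr hupd
  · obtain rfl : x = y := funext fun i => hxy i (by omega)
    rfl
termination_by n - k

variable (n A φ) in
def IsLosingPlay (x : ∀ i, A i) : Prop :=
  ∀ k, ¬ AltTrue n A φ k x

theorem exists_isLosingPlay_extending [∀ i, Nonempty (A i)] {k : ℕ} {x : ∀ i, A i}
    (hx : ∀ l ≤ k, ¬ AltTrue n A φ l x) :
    ∃ y, (∀ i : Fin n, (i : ℕ) < k → y i = x i) ∧ IsLosingPlay n A φ y := by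
  by_cases hk : k < n
  · obtain ⟨a, ha⟩ : ∃ a, ¬ AltTrue n A φ (k + 1) (Function.update x ⟨k, hk⟩ a) := by
      have hxk := hx k le_rfl
      rcases Nat.mod_two_eq_zero_or_one k with h2 | h2
      · simpa [altTrue_of_even hk h2] using hxk
      · simp only [altTrue_of_odd hk h2, not_exists] at hxk
        exact ⟨Classical.arbitrary _, hxk _⟩
    have hupd : ∀ i : Fin n, (i : ℕ) < k → Function.update x ⟨k, hk⟩ a i = x i :=
      fun i hi => Function.update_of_ne (Fin.ne_of_val_ne hi.ne) _ _
    obtain ⟨y, hy, hlosing⟩ := exists_isLosingPlay_extending (k := k + 1) fun l hl => by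
      rcases hl.lt_or_eq with hl | rfl
      · rw [altTrue_congr fun i hi => hupd i (by omega)]
        exact hx l (by omega)
      · exact ha
    exact ⟨y, fun i hi => (hy i (by omega)).trans (hupd i hi), hlosing⟩
  · refine ⟨x, fun _ _ => rfl, fun l hl => ?_⟩
    rcases le_total l k with hlk | hkl
    · exact hx l hlk hl
    · exact hx k le_rfl ((altTrue_of_le (by omega)).2 ((altTrue_of_le (by omega)).1 hl))
termination_by n - k

end AltTrue

section Responsibility

variable {n : ℕ} {A : Fin n → Type}

def Gap (γ : (∀ i, A i) → Prop) (e : ℕ) (s : ∀ i, A i) : Prop :=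
  ¬ γ s ∧ ∀ e' ≤ e, ∀ j, ¬ Resp γ e' j s

def Forces (i : Fin n) (s : ∀ i, A i) (P : (∀ i, A i) → Prop) : Prop :=
  ∃ t : ∀ i', A i', (∀ j, j < i → t j = s j) ∧ ∀ u : ∀ i', A i', (∀ j, j ≤ i → u j = t j) → P u

theorem Forces.mono {i : Fin n} {s : ∀ i, A i} {P Q : (∀ i, A i) → Prop} (h : Forces i s P)
    (hPQ : ∀ u, P u → Q u) : Forces i s Q :=
  let ⟨t, hts, htP⟩ := h
  ⟨t, hts, fun u hut => hPQ u (htP u hut)⟩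

variable {γ : (∀ i, A i) → Prop}

theorem not_resp_zero {i : Fin n} {s : ∀ i, A i} : ¬ Resp γ 0 i s := by
  rw [Resp]
  exact id

theorem resp_succ_iff {f : ℕ} {i : Fin n} {s : ∀ i, A i} :
    Resp γ (f + 1) i s ↔ Gap γ f s ∧ Forces i s (fun u => ¬ Gap γ f u) := by
  rw [Resp]
  rfl

theorem gap_succ_iff {e : ℕ} {s : ∀ i, A i} :
    Gap γ (e + 1) s ↔ Gap γ e s ∧ ∀ j, ¬ Resp γ (e + 1) j s := by
  constructor
  · rintro ⟨hγ, hresp⟩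
    exact ⟨⟨hγ, fun e' he' => hresp e' (by omega)⟩, hresp (e + 1) le_rfl⟩
  · rintro ⟨⟨hγ, hresp⟩, hlast⟩
    refine ⟨hγ, fun e' he' => ?_⟩
    rcases he'.lt_or_eq with he' | rfl
    · exact hresp e' (by omega)
    · exact hlast

theorem gapFree_iff_forall_not_gap {d : ℕ} : GapFree γ d ↔ ∀ s, ¬ Gap γ d s := by
  simp only [GapFree, Gap, not_and, not_forall, not_not, exists_prop]

/-- Responsibility of order `e + 1` needs a deviation to a profile without a gap of order `e`,
but every deviation keeps all but one unit of the potential. -/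
theorem gap_of_le_potential (V : (∀ i, A i) → ℕ) (hV : ∀ s, 0 < V s → ¬ γ s)
    (hdev : ∀ s (j : Fin n) (t : ∀ i, A i), (∀ k, k < j → t k = s k) →
      ∃ u, (∀ k, k ≤ j → u k = t k) ∧ V s ≤ V u + 1) :
    ∀ e s, e + 1 ≤ V s → Gap γ e s := by
  intro e
  induction e with
  | zero =>
    intro s hs
    exact ⟨hV s (by omega), fun e' he' j => by
      obtain rfl : e' = 0 := by omega
      exact not_resp_zero⟩
  | succ e ih =>
    intro s hs
    refine gap_succ_iff.2 ⟨ih s (by omega), fun j hresp => ?_⟩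
    obtain ⟨-, t, hts, htu⟩ := resp_succ_iff.1 hresp
    obtain ⟨u, hut, hVu⟩ := hdev s j t hts
    exact htu u hut (ih u (by omega))

end Responsibility

section Canonical

variable {d : ℕ} {X : Fin (2*d+1) → Type} (φ : (∀ i, X i) → Prop)

def IsWinningAt (p : ℕ) (s : ∀ i, CanA X i) : Prop :=
  (∀ i : Fin (2*d+1), (i : ℕ) < p → ∀ j, (s i).2 j = true) ∧
    AltTrue (2*d+1) X φ p (fun i => (s i).1)

theorem isWinningAt_one (h : ∀ x, AltTrue (2*d+1) X φ 0 x) (s : ∀ i, CanA X i) :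
    IsWinningAt φ 1 s := by
  refine ⟨fun i hi j => ?_, (h _).succ_of_even rfl⟩
  have := j.isLt
  omega

theorem canGamma_of_isWinningAt {s : ∀ i, CanA X i} (hs : IsWinningAt φ (2*d+1) s) :
    canGamma X φ s :=
  ⟨(altTrue_of_le le_rfl).1 hs.2, fun i => hs.1 i i.isLt⟩

theorem forces_isWinningAt_add_two {p : ℕ} (hp : p < 2*d+1) (hodd : p % 2 = 1)
    {s : ∀ i, CanA X i} (hs : IsWinningAt φ p s) :
    Forces ⟨p, hp⟩ s (IsWinningAt φ (p + 2)) := by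
  obtain ⟨hq, hA⟩ := hs
  obtain ⟨a, ha⟩ := (altTrue_of_odd hp hodd).1 hA
  -- Moralist `p` plays the winning move `a` and sets its fresh variable to `true`.
  refine ⟨Function.update s ⟨p, hp⟩ ((a, fun _ => true) : CanA X ⟨p, hp⟩),
    fun k hk => Function.update_of_ne hk.ne _ _, fun u hu => ?_⟩
  have hup : u ⟨p, hp⟩ = ((a, fun _ => true) : CanA X ⟨p, hp⟩) :=
    (hu _ le_rfl).trans (Function.update_self _ _ _)
  have hus : ∀ k : Fin (2*d+1), (k : ℕ) < p → u k = s k := fun k hk =>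
    (hu k (Fin.le_def.2 hk.le)).trans (Function.update_of_ne (Fin.ne_of_val_ne hk.ne) _ _)
  constructor
  · intro i hi j
    rcases lt_trichotomy (i : ℕ) p with hip | hip | hip
    · rw [hus i hip]
      exact hq i hip j
    · obtain rfl : i = ⟨p, hp⟩ := Fin.ext hip
      rw [hup]
    · have := j.isLt
      omega
  · refine AltTrue.succ_of_even (by omega) ((altTrue_congr fun k hk => ?_).1 ha)
    by_cases hkp : k = ⟨p, hp⟩
    · subst hkp
      rw [Function.update_self, hup]
    · have : (k : ℕ) ≠ p := fun h => hkp (Fin.ext h)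
      rw [Function.update_of_ne hkp, hus k (by omega)]

theorem not_gap_of_isWinningAt (f p : ℕ) (s : ∀ i, CanA X i) (hpf : p + 2 * f = 2*d+1)
    (hs : IsWinningAt φ p s) : ¬ Gap (canGamma X φ) f s := by
  induction f generalizing p s with
  | zero =>
    obtain rfl : p = 2*d+1 := by omega
    exact fun hgap => hgap.1 (canGamma_of_isWinningAt φ hs)
  | succ g ih =>
    intro hgap
    obtain ⟨hgap_g, hnot_resp⟩ := gap_succ_iff.1 hgap
    have hforces := (forces_isWinningAt_add_two φ (by omega) (by omega) hs).mono
      fun u hu => ih (p + 2) u (by omega) hu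
    exact hnot_resp _ (resp_succ_iff.2 ⟨hgap_g, hforces⟩)

open Classical in
noncomputable def falseBlocks (s : ∀ i, CanA X i) : Finset (Fin (2*d+1)) :=
  Finset.univ.filter fun i => ∃ j, (s i).2 j = false

theorem mem_falseBlocks {s : ∀ i, CanA X i} {i : Fin (2*d+1)} :
    i ∈ falseBlocks s ↔ ∃ j, (s i).2 j = false := by
  simp [falseBlocks]

theorem odd_of_mem_falseBlocks {s : ∀ i, CanA X i} {i : Fin (2*d+1)} (hi : i ∈ falseBlocks s) :
    (i : ℕ) % 2 = 1 := by
  obtain ⟨j, -⟩ := mem_falseBlocks.1 hi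
  have := j.isLt
  omega

open Classical in
/-- The paper's degree of immorality, with conformity to a winning Devil strategy replaced by
the play being lost for Moralist at every position. -/
noncomputable def potential (s : ∀ i, CanA X i) : ℕ :=
  (falseBlocks s).card + if IsLosingPlay (2*d+1) X φ (fun i => (s i).1) then 1 else 0

theorem potential_of_isLosingPlay {s : ∀ i, CanA X i}
    (hs : IsLosingPlay (2*d+1) X φ (fun i => (s i).1)) :
    potential φ s = (falseBlocks s).card + 1 := by
  simp [potential, hs]

theorem potential_le_card_add_one {s : ∀ i, CanA X i} :
    potential φ s ≤ (falseBlocks s).card + 1 := by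
  unfold potential
  split_ifs <;> omega

theorem card_falseBlocks_le_potential {s : ∀ i, CanA X i} :
    (falseBlocks s).card ≤ potential φ s :=
  Nat.le_add_right _ _

theorem not_canGamma_of_potential_pos {s : ∀ i, CanA X i} (hs : 0 < potential φ s) :
    ¬ canGamma X φ s := by
  rintro ⟨hφ, hq⟩
  have hnone : falseBlocks s = ∅ :=
    Finset.eq_empty_of_forall_notMem fun i hi => by
      obtain ⟨j, hj⟩ := mem_falseBlocks.1 hi
      simp [hq i j] at hj
  have hwin : ¬ IsLosingPlay (2*d+1) X φ (fun i => (s i).1) :=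
    fun h => h (2*d+1) ((altTrue_of_le le_rfl).2 hφ)
  simp [potential, hnone, hwin] at hs

def resume (t : ∀ i, CanA X i) (j : Fin (2*d+1)) (y : ∀ i, X i) : ∀ i, CanA X i :=
  fun k => if k ≤ j then t k else ((y k, fun _ => false) : CanA X k)

theorem resume_of_le {t : ∀ i, CanA X i} {j k : Fin (2*d+1)} {y : ∀ i, X i} (hk : k ≤ j) :
    resume t j y k = t k :=
  if_pos hk

theorem falseBlocks_subset_insert_resume {s t : ∀ i, CanA X i} {j : Fin (2*d+1)}
    {y : ∀ i, X i} (hts : ∀ k, k < j → t k = s k) :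
    falseBlocks s ⊆ insert j (falseBlocks (resume t j y)) := by
  intro k hk
  obtain ⟨q, hq⟩ := mem_falseBlocks.1 hk
  rcases lt_trichotomy k j with hkj | rfl | hjk
  · refine Finset.mem_insert_of_mem (mem_falseBlocks.2 ⟨q, ?_⟩)
    rwa [resume_of_le hkj.le, hts k hkj]
  · exact Finset.mem_insert_self _ _
  · refine Finset.mem_insert_of_mem (mem_falseBlocks.2 ⟨q, ?_⟩)
    simp [resume, not_le.2 hjk]

variable [∀ i, Nonempty (X i)]

theorem exists_deviation_potential_le (s : ∀ i, CanA X i) (j : Fin (2*d+1))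
    (t : ∀ i, CanA X i) (hts : ∀ k, k < j → t k = s k) :
    ∃ u, (∀ k, k ≤ j → u k = t k) ∧ potential φ s ≤ potential φ u + 1 := by
  by_cases hcase : (j : ℕ) % 2 = 1 ∧ IsLosingPlay (2*d+1) X φ (fun i => (s i).1)
  · obtain ⟨hodd, hlosing⟩ := hcase
    have hagree : ∀ i : Fin (2*d+1), (i : ℕ) < j → (t i).1 = (s i).1 :=
      fun i hi => by rw [hts i (Fin.lt_def.2 hi)]
    -- Devil answers from agent `j + 1` on so that the play stays lost for Moralist.
    obtain ⟨y, hyt, hy⟩ := exists_isLosingPlay_extending (k := j + 1)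
      (x := fun i => (t i).1) fun l hl => by
        rcases hl.lt_or_eq with hl | rfl
        · rw [altTrue_congr fun i hi => hagree i (by omega)]
          exact hlosing l
        · exact fun h => hlosing j <| (altTrue_congr hagree).1 (h.of_succ_of_odd hodd)
    have hfst : (fun i => (resume t j y i).1) = y := by
      funext i
      by_cases hij : i ≤ j
      · rw [resume_of_le hij, hyt i (by have := Fin.le_def.1 hij; omega)]
      · simp [resume, hij]
    have hsub := Finset.card_le_card (falseBlocks_subset_insert_resume (y := y) hts)
    have hins := Finset.card_insert_le j (falseBlocks (resume t j y))
    refine ⟨resume t j y, fun k hk => resume_of_le hk, ?_⟩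
    rw [potential_of_isLosingPlay φ hlosing,
      potential_of_isLosingPlay φ (s := resume t j y) (by rwa [hfst])]
    omega
  · have hsub := falseBlocks_subset_insert_resume (y := fun i => (s i).1) hts
    refine ⟨resume t j fun i => (s i).1, fun k hk => resume_of_le hk, ?_⟩
    have hu := card_falseBlocks_le_potential φ (s := resume t j fun i => (s i).1)
    by_cases hodd : (j : ℕ) % 2 = 1
    · have hins := Finset.card_insert_le j (falseBlocks (resume t j fun i => (s i).1))
      have := Finset.card_le_card hsub
      have hnot : ¬ IsLosingPlay (2*d+1) X φ (fun i => (s i).1) := fun h => hcase ⟨hodd, h⟩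
      have hs : potential φ s = (falseBlocks s).card := by simp [potential, hnot]
      omega
    · have hj : j ∉ falseBlocks s := fun h => hodd (odd_of_mem_falseBlocks h)
      have := Finset.card_le_card ((Finset.subset_insert_iff_of_notMem hj).1 hsub)
      have := potential_le_card_add_one φ (s := s)
      omega

theorem exists_gap_of_not_altTrue {x : ∀ i, X i} (hx : ¬ AltTrue (2*d+1) X φ 0 x) :
    ∃ s, Gap (canGamma X φ) d s := by
  obtain ⟨y, -, hy⟩ := exists_isLosingPlay_extending (k := 0) fun l hl => by
    obtain rfl : l = 0 := by omega
    exact hx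
  let s : ∀ i, CanA X i := fun i => (y i, fun _ => false)
  have hcard : d ≤ (falseBlocks s).card := by
    simpa using Finset.card_le_card_of_injOn (s := Finset.univ)
      (fun a : Fin d => (⟨2 * a + 1, by omega⟩ : Fin (2*d+1)))
      (fun a _ => mem_falseBlocks.2 ⟨⟨0, by simp [Nat.add_mod]⟩, rfl⟩)
      (fun a _ b _ hab => Fin.ext (by simpa using hab))
  refine ⟨s, gap_of_le_potential (potential φ) (fun _ => not_canGamma_of_potential_pos φ)
    (exists_deviation_potential_le φ) d s ?_⟩
  rw [potential_of_isLosingPlay φ hy]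
  omega

end Canonical

/-- The canonical mechanism `M(φ, x₁,…,x_{2d+1})` is `d`-gap-free if and only if
the closed quantified Boolean formula `∀x₁ ∃x₂ ∀x₃ … ∃x_{2d} ∀x_{2d+1} φ` is true. -/
theorem canonical_gapFree_iff_qbf {d : ℕ} (X : Fin (2*d+1) → Type)
    [∀ i, Nonempty (X i)] (φ : (∀ i, X i) → Prop) :
    GapFree (canGamma X φ) d ↔ ∀ s₀ : ∀ i, X i, AltTrue (2*d+1) X φ 0 s₀ := by
  rw [gapFree_iff_forall_not_gap]
  constructor
  · intro hgapFree x
    by_contra hx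
    obtain ⟨s, hs⟩ := exists_gap_of_not_altTrue φ hx
    exact hgapFree s hs
  · intro hqbf s
    exact not_gap_of_isWinningAt φ d 1 s (by omega) (isWinningAt_one φ hqbf s)
end
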